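/- arXiv:math/9807094 — 2 statements merged into one kernel-verified Lean document; each statement's English description precedes it below -/
import Mathlib

section
/- Let k be a field and H a Hopf algebra over k with comultiplication Δ, counit ε, and antipode S. Suppose a ∈ H is grouplike (Δ(a) = a ⊗ a, ε(a) = 1) and b ∈ H satisfies Δ(b) = b ⊗ a + 1 ⊗ b, ε(b) = 0. Fix q ∈ k and a natural number n ≥ 1, and let I be the two-sided ideal of H generated by aⁿb − q·baⁿ. Then I is a Hopf ideal: Δ(I) ⊆ I ⊗ H + H ⊗ I (sum of the images of I ⊗ H and H ⊗ I inside H ⊗ H), ε(I) = 0, and S(I) ⊆ I. -/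
open TensorProduct Coalgebra HopfAlgebra

namespace HopfAux

variable {R : Type*} {A : Type*} [CommSemiring R] [Semiring A] [HopfAlgebra R A]

/-- product of two representations -/
noncomputable def reprMul {ι κ : Type*} {u v : A} (ru : Coalgebra.Repr R u ι) (rv : Coalgebra.Repr R v κ) :
    Coalgebra.Repr R (u * v) (ι × κ) where
  index := ru.index ×ˢ rv.index
  left := fun p => ru.left p.1 * rv.left p.2
  right := fun p => ru.right p.1 * rv.right p.2
  eq := by
    show _ = Coalgebra.comul (R := R) (u * v)
    rw [Bialgebra.comul_mul, ← ru.eq, ← rv.eq, Finset.sum_mul_sum, Finset.sum_product]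
    simp [Algebra.TensorProduct.tmul_mul_tmul]

lemma counit_smul_left_sum {ι : Type*} {z : A} (r : Coalgebra.Repr R z ι) :
    ∑ i ∈ r.index, counit (R := R) (r.right i) • r.left i = z := by
  have h := Coalgebra.sum_tmul_counit_eq (R := R) r
  apply_fun (TensorProduct.rid R A) at h
  simp only [map_sum, TensorProduct.rid_tmul, one_smul] at h
  exact h

lemma counit_smul_right_sum {ι : Type*} {z : A} (r : Coalgebra.Repr R z ι) :
    ∑ i ∈ r.index, counit (R := R) (r.left i) • r.right i = z := by
  have h := Coalgebra.sum_counit_tmul_eq (R := R) r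
  apply_fun (TensorProduct.lid R A) at h
  simp only [map_sum, TensorProduct.lid_tmul, one_smul] at h
  exact h


lemma E3 {ι κ : Type*} {u v : A} (ru : Coalgebra.Repr R u ι) (rv : Coalgebra.Repr R v κ) :
    ∑ p ∈ ru.index, ∑ q ∈ rv.index,
      antipode (R := R) (ru.left p * rv.left q) * (ru.right p * rv.right q)
      = (counit (R := R) u * counit (R := R) v) • (1 : A) := by
  have h := sum_antipode_mul_eq_smul (R := R) (repr := reprMul ru rv)
  rw [Bialgebra.counit_mul] at h
  rw [← h]
  exact (Finset.sum_product (s := ru.index) (t := rv.index)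
    (f := fun p => antipode (R := R) (ru.left p.1 * rv.left p.2)
      * (ru.right p.1 * rv.right p.2))).symm

lemma E2 {ι κ : Type*} {u v : A} (ru : Coalgebra.Repr R u ι) (rv : Coalgebra.Repr R v κ) :
    ∑ p ∈ ru.index, ∑ q ∈ rv.index,
      (ru.left p * rv.left q) * (antipode (R := R) (rv.right q) * antipode (R := R) (ru.right p))
      = (counit (R := R) u * counit (R := R) v) • (1 : A) := by
  have inner : ∀ p, ∑ q ∈ rv.index,
      (ru.left p * rv.left q) * (antipode (R := R) (rv.right q) * antipode (R := R) (ru.right p))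
      = counit (R := R) v • (ru.left p * antipode (R := R) (ru.right p)) := by
    intro p
    have : ∀ q, (ru.left p * rv.left q) *
        (antipode (R := R) (rv.right q) * antipode (R := R) (ru.right p))
        = ru.left p * ((rv.left q * antipode (R := R) (rv.right q)) * antipode (R := R) (ru.right p)) := by
      intro q; noncomm_ring
    rw [Finset.sum_congr rfl fun q _ => this q, ← Finset.mul_sum, ← Finset.sum_mul,
      sum_mul_antipode_eq_smul (R := R) rv, smul_mul_assoc, one_mul, mul_smul_comm]
  rw [Finset.sum_congr rfl fun p _ => inner p, ← Finset.smul_sum,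
    sum_mul_antipode_eq_smul (R := R) ru, smul_smul, mul_comm]

lemma triple_regroup {ι : Type*} (f1 f2 f3 : A →ₗ[R] A) {x : A} (rx : Coalgebra.Repr R x ι)
    (r1 : ∀ i, Coalgebra.Repr R (rx.left i) (A × A)) (r2 : ∀ i, Coalgebra.Repr R (rx.right i) (A × A)) :
    ∑ i ∈ rx.index, ∑ p ∈ (r2 i).index,
      f1 (rx.left i) * (f2 ((r2 i).left p) * f3 ((r2 i).right p))
    = ∑ i ∈ rx.index, ∑ p ∈ (r1 i).index,
      f1 ((r1 i).left p) * (f2 ((r1 i).right p) * f3 (rx.right i)) := by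
  have h := Coalgebra.sum_map_tmul_tmul_eq (R := R) f1 f2 f3 x (repr := rx) (a₁ := r1) (a₂ := r2)
  apply_fun (LinearMap.mul' R A ∘ₗ LinearMap.lTensor A (LinearMap.mul' R A)) at h
  simpa [map_sum, LinearMap.mul'_apply] using h


lemma sum_swap4 {α β : Type*} {γ : α → Type*} {δ : β → Type*} {M : Type*} [AddCommMonoid M]
    (s : Finset α) (t : Finset β) (S1 : ∀ a, Finset (γ a)) (S2 : ∀ b, Finset (δ b))
    (F : (a : α) → γ a → (b : β) → δ b → M) :
    ∑ a ∈ s, ∑ c ∈ S1 a, ∑ b ∈ t, ∑ d ∈ S2 b, F a c b d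
      = ∑ b ∈ t, ∑ d ∈ S2 b, ∑ a ∈ s, ∑ c ∈ S1 a, F a c b d := by
  calc ∑ a ∈ s, ∑ c ∈ S1 a, ∑ b ∈ t, ∑ d ∈ S2 b, F a c b d
      = ∑ a ∈ s, ∑ b ∈ t, ∑ c ∈ S1 a, ∑ d ∈ S2 b, F a c b d :=
        Finset.sum_congr rfl fun a _ => Finset.sum_comm ..
    _ = ∑ b ∈ t, ∑ a ∈ s, ∑ c ∈ S1 a, ∑ d ∈ S2 b, F a c b d := Finset.sum_comm ..
    _ = ∑ b ∈ t, ∑ a ∈ s, ∑ d ∈ S2 b, ∑ c ∈ S1 a, F a c b d :=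
        Finset.sum_congr rfl fun b _ => Finset.sum_congr rfl fun a _ => Finset.sum_comm ..
    _ = ∑ b ∈ t, ∑ d ∈ S2 b, ∑ a ∈ s, ∑ c ∈ S1 a, F a c b d :=
        Finset.sum_congr rfl fun b _ => Finset.sum_comm ..

theorem antipode_mul_antidistrib (x y : A) :
    antipode (R := R) (x * y) = antipode (R := R) y * antipode (R := R) x := by
  have rx := Coalgebra.Repr.arbitrary R x
  have ry := Coalgebra.Repr.arbitrary R y
  have r1x : ∀ i, Coalgebra.Repr R (rx.left i) (A × A) := fun i => Coalgebra.Repr.arbitrary R _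
  have r2x : ∀ i, Coalgebra.Repr R (rx.right i) (A × A) := fun i => Coalgebra.Repr.arbitrary R _
  have r1y : ∀ j, Coalgebra.Repr R (ry.left j) (A × A) := fun j => Coalgebra.Repr.arbitrary R _
  have r2y : ∀ j, Coalgebra.Repr R (ry.right j) (A × A) := fun j => Coalgebra.Repr.arbitrary R _
  set S : A →ₗ[R] A := antipode (R := R) with hSdef
  -- Step 1
  have hxy : x * y = ∑ i ∈ rx.index, ∑ j ∈ ry.index,
      (counit (R := R) (rx.right i) * counit (R := R) (ry.right j)) • (rx.left i * ry.left j) := by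
    conv_lhs => rw [← counit_smul_left_sum rx, ← counit_smul_left_sum ry]
    rw [Finset.sum_mul_sum]
    exact Finset.sum_congr rfl fun i _ => Finset.sum_congr rfl fun j _ => by
      rw [smul_mul_assoc, mul_smul_comm, smul_smul]
  have A1 : S (x * y) = ∑ i ∈ rx.index, ∑ j ∈ ry.index,
      (counit (R := R) (rx.right i) * counit (R := R) (ry.right j)) • S (rx.left i * ry.left j) := by
    rw [hxy]
    simp only [map_sum, map_smul]
  -- Step 2 : expand the scalar using E2
  have A2 : S (x * y) = ∑ i ∈ rx.index, ∑ j ∈ ry.index, ∑ p ∈ (r2x i).index,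
      ∑ q ∈ (r2y j).index, S (rx.left i * ry.left j) *
        (((r2x i).left p * (r2y j).left q) *
          (S ((r2y j).right q) * S ((r2x i).right p))) := by
    rw [A1]
    refine Finset.sum_congr rfl fun i _ => Finset.sum_congr rfl fun j _ => ?_
    calc (counit (R := R) (rx.right i) * counit (R := R) (ry.right j)) • S (rx.left i * ry.left j)
        = S (rx.left i * ry.left j) *
          ((counit (R := R) (rx.right i) * counit (R := R) (ry.right j)) • (1 : A)) := by
          rw [mul_smul_comm, mul_one]
      _ = S (rx.left i * ry.left j) * ∑ p ∈ (r2x i).index, ∑ q ∈ (r2y j).index,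
            ((r2x i).left p * (r2y j).left q) *
              (S ((r2y j).right q) * S ((r2x i).right p)) := by rw [E2 (r2x i) (r2y j)]
      _ = _ := by
            rw [Finset.mul_sum]
            exact Finset.sum_congr rfl fun p _ => by rw [Finset.mul_sum]
  -- Step 3 : reorder to (j, q, i, p)
  have A3 : S (x * y) = ∑ j ∈ ry.index, ∑ q ∈ (r2y j).index, ∑ i ∈ rx.index,
      ∑ p ∈ (r2x i).index, S (rx.left i * ry.left j) *
        (((r2x i).left p * (r2y j).left q) *
          (S ((r2y j).right q) * S ((r2x i).right p))) := by
    rw [A2]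
    calc ∑ i ∈ rx.index, ∑ j ∈ ry.index, ∑ p ∈ (r2x i).index, ∑ q ∈ (r2y j).index,
          S (rx.left i * ry.left j) * (((r2x i).left p * (r2y j).left q) *
            (S ((r2y j).right q) * S ((r2x i).right p)))
        = ∑ i ∈ rx.index, ∑ p ∈ (r2x i).index, ∑ j ∈ ry.index, ∑ q ∈ (r2y j).index,
          S (rx.left i * ry.left j) * (((r2x i).left p * (r2y j).left q) *
            (S ((r2y j).right q) * S ((r2x i).right p))) :=
          Finset.sum_congr rfl fun i _ => Finset.sum_comm ..
      _ = _ := sum_swap4 rx.index ry.index (fun i => (r2x i).index) (fun j => (r2y j).index) _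
  -- Step 4 : coassociativity in `x`
  have A4 : S (x * y) = ∑ j ∈ ry.index, ∑ q ∈ (r2y j).index, ∑ i ∈ rx.index,
      ∑ p ∈ (r1x i).index, S ((r1x i).left p * ry.left j) *
        ((((r1x i).right p) * (r2y j).left q) *
          (S ((r2y j).right q) * S (rx.right i))) := by
    rw [A3]
    refine Finset.sum_congr rfl fun j _ => Finset.sum_congr rfl fun q _ => ?_
    have h := triple_regroup (S ∘ₗ LinearMap.mulRight R (ry.left j))
      (LinearMap.mulRight R ((r2y j).left q))
      ((LinearMap.mulLeft R (S ((r2y j).right q))) ∘ₗ S) rx r1x r2x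
    simpa only [LinearMap.coe_comp, Function.comp_apply, LinearMap.mulRight_apply,
      LinearMap.mulLeft_apply] using h
  -- Step 5 : reorder to (i, p, j, q)
  have A5 : S (x * y) = ∑ i ∈ rx.index, ∑ p ∈ (r1x i).index, ∑ j ∈ ry.index,
      ∑ q ∈ (r2y j).index, S ((r1x i).left p * ry.left j) *
        ((((r1x i).right p) * (r2y j).left q) *
          (S ((r2y j).right q) * S (rx.right i))) := by
    rw [A4]
    exact sum_swap4 ry.index rx.index (fun j => (r2y j).index) (fun i => (r1x i).index) _
  -- Step 6 : coassociativity in `y`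
  have A6 : S (x * y) = ∑ i ∈ rx.index, ∑ p ∈ (r1x i).index, ∑ j ∈ ry.index,
      ∑ q ∈ (r1y j).index, S ((r1x i).left p * (r1y j).left q) *
        ((((r1x i).right p) * (r1y j).right q) *
          (S (ry.right j) * S (rx.right i))) := by
    rw [A5]
    refine Finset.sum_congr rfl fun i _ => Finset.sum_congr rfl fun p _ => ?_
    have h := triple_regroup (S ∘ₗ LinearMap.mulLeft R ((r1x i).left p))
      (LinearMap.mulLeft R ((r1x i).right p))
      ((LinearMap.mulRight R (S (rx.right i))) ∘ₗ S) ry r1y r2y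
    simpa only [LinearMap.coe_comp, Function.comp_apply, LinearMap.mulRight_apply,
      LinearMap.mulLeft_apply] using h
  -- Step 7 : reorder to (i, j, p, q)
  have A7 : S (x * y) = ∑ i ∈ rx.index, ∑ j ∈ ry.index, ∑ p ∈ (r1x i).index,
      ∑ q ∈ (r1y j).index, S ((r1x i).left p * (r1y j).left q) *
        ((((r1x i).right p) * (r1y j).right q) *
          (S (ry.right j) * S (rx.right i))) := by
    rw [A6]
    exact Finset.sum_congr rfl fun i _ => Finset.sum_comm ..
  -- Step 8 : contract the inner double sums using E3
  have A8 : S (x * y) = ∑ i ∈ rx.index, ∑ j ∈ ry.index,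
      (counit (R := R) (rx.left i) * counit (R := R) (ry.left j)) •
        (S (ry.right j) * S (rx.right i)) := by
    rw [A7]
    refine Finset.sum_congr rfl fun i _ => Finset.sum_congr rfl fun j _ => ?_
    calc ∑ p ∈ (r1x i).index, ∑ q ∈ (r1y j).index,
          S ((r1x i).left p * (r1y j).left q) *
            ((((r1x i).right p) * (r1y j).right q) * (S (ry.right j) * S (rx.right i)))
        = ∑ p ∈ (r1x i).index, ∑ q ∈ (r1y j).index,
          (S ((r1x i).left p * (r1y j).left q) *
            (((r1x i).right p) * (r1y j).right q)) * (S (ry.right j) * S (rx.right i)) :=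
          Finset.sum_congr rfl fun p _ => Finset.sum_congr rfl fun q _ => (mul_assoc _ _ _).symm
      _ = (∑ p ∈ (r1x i).index, ∑ q ∈ (r1y j).index,
            S ((r1x i).left p * (r1y j).left q) *
              (((r1x i).right p) * (r1y j).right q)) * (S (ry.right j) * S (rx.right i)) := by
          rw [Finset.sum_mul]
          exact Finset.sum_congr rfl fun p _ => by rw [Finset.sum_mul]
      _ = _ := by rw [E3 (r1x i) (r1y j), smul_mul_assoc, one_mul]
  -- Step 9 : conclude
  rw [A8]
  have hterm : ∀ i j, (counit (R := R) (rx.left i) * counit (R := R) (ry.left j)) •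
      (S (ry.right j) * S (rx.right i))
      = (counit (R := R) (ry.left j) • S (ry.right j)) *
        (counit (R := R) (rx.left i) • S (rx.right i)) := by
    intro i j
    rw [smul_mul_assoc, mul_smul_comm, smul_smul, mul_comm]
  calc ∑ i ∈ rx.index, ∑ j ∈ ry.index,
        (counit (R := R) (rx.left i) * counit (R := R) (ry.left j)) •
          (S (ry.right j) * S (rx.right i))
      = ∑ i ∈ rx.index, (∑ j ∈ ry.index, counit (R := R) (ry.left j) • S (ry.right j)) *
          (counit (R := R) (rx.left i) • S (rx.right i)) := by
        refine Finset.sum_congr rfl fun i _ => ?_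
        rw [Finset.sum_mul]
        exact Finset.sum_congr rfl fun j _ => hterm i j
    _ = S y * S x := by
        have hy : ∑ j ∈ ry.index, counit (R := R) (ry.left j) • S (ry.right j) = S y := by
          simp only [← map_smul]
          rw [← map_sum, counit_smul_right_sum ry]
        have hx : ∑ i ∈ rx.index, counit (R := R) (rx.left i) • S (rx.right i) = S x := by
          simp only [← map_smul]
          rw [← map_sum, counit_smul_right_sum rx]
        rw [hy, ← Finset.mul_sum, hx]


lemma antipode_one' : antipode (R := R) (1 : A) = 1 := by
  have h := mul_antipode_rTensor_comul_apply (R := R) (1 : A)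
  rw [Bialgebra.comul_one] at h
  rw [show (1 : A ⊗[R] A) = (1 : A) ⊗ₜ[R] (1 : A) from rfl] at h
  simpa using h

lemma antipode_pow' (a : A) (m : ℕ) :
    antipode (R := R) (a ^ m) = antipode (R := R) a ^ m := by
  induction m with
  | zero => simpa using antipode_one'
  | succ m ih =>
    rw [pow_succ, antipode_mul_antidistrib, ih, pow_succ']

end HopfAux

/-- The two-sided ideal of a Hopf algebra generated by `aⁿb − q·baⁿ`
(with `a` grouplike, `Δ(b) = b ⊗ a + 1 ⊗ b`, `ε(b) = 0`, `n ≥ 1`) is a Hopf ideal: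
`Δ(I) ⊆ I ⊗ H + H ⊗ I`, `ε(I) = 0` and `S(I) ⊆ I`. -/
theorem hopf_ideal_anb_sub_q_ban
    (k : Type*) [Field k] (H : Type*) [Ring H] [HopfAlgebra k H]
    (a b : H) (ha : Coalgebra.comul (R := k) a = a ⊗ₜ[k] a)
    (hεa : Coalgebra.counit (R := k) a = 1)
    (hb : Coalgebra.comul (R := k) b = b ⊗ₜ[k] a + 1 ⊗ₜ[k] b)
    (hεb : Coalgebra.counit (R := k) b = 0)
    (q : k) (n : ℕ) (hn : 1 ≤ n)
    (I : TwoSidedIdeal H) (hI : I = TwoSidedIdeal.span {a ^ n * b - q • (b * a ^ n)})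
    -- `J` is the underlying `k`-submodule of the two-sided ideal `I`
    (J : Submodule k H) (hJ : J = (TwoSidedIdeal.asIdeal I).restrictScalars k) :
    (∀ x ∈ J, Coalgebra.comul (R := k) x ∈
        LinearMap.range (LinearMap.rTensor H J.subtype)
          + LinearMap.range (LinearMap.lTensor H J.subtype)) ∧
    (∀ x ∈ J, Coalgebra.counit (R := k) x = 0) ∧
    (∀ x ∈ J, HopfAlgebra.antipode (R := k) x ∈ J) := by
  have memJ : ∀ {z : H}, z ∈ J ↔ z ∈ I := fun {z} => by
    rw [hJ]
    exact (Submodule.restrictScalars_mem _ _ _).trans TwoSidedIdeal.mem_asIdeal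
  set g : H := a ^ n * b - q • (b * a ^ n) with hgdef
  have hgI : g ∈ I := by rw [hI]; exact TwoSidedIdeal.subset_span rfl
  have hgJ : g ∈ J := memJ.2 hgI
  -- antipode facts
  have hSa : HopfAlgebra.antipode (R := k) a * a = 1 := by
    have h := HopfAlgebra.mul_antipode_rTensor_comul_apply (R := k) a
    rw [ha, LinearMap.rTensor_tmul, LinearMap.mul'_apply, hεa, map_one] at h
    exact h
  have haS : a * HopfAlgebra.antipode (R := k) a = 1 := by
    have h := HopfAlgebra.mul_antipode_lTensor_comul_apply (R := k) a
    rw [ha, LinearMap.lTensor_tmul, LinearMap.mul'_apply, hεa, map_one] at h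
    exact h
  set c : H := HopfAlgebra.antipode (R := k) a with hc
  have hSb : HopfAlgebra.antipode (R := k) b = -(b * c) := by
    have h := HopfAlgebra.mul_antipode_rTensor_comul_apply (R := k) b
    rw [hb, map_add, LinearMap.rTensor_tmul, LinearMap.rTensor_tmul, map_add,
      LinearMap.mul'_apply, LinearMap.mul'_apply, hεb, map_zero,
      HopfAux.antipode_one', one_mul] at h
    have h2 : HopfAlgebra.antipode (R := k) b * a = -b := eq_neg_of_add_eq_zero_left h
    calc HopfAlgebra.antipode (R := k) b
        = HopfAlgebra.antipode (R := k) b * (a * c) := by rw [haS, mul_one]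
      _ = (HopfAlgebra.antipode (R := k) b * a) * c := (mul_assoc _ _ _).symm
      _ = -b * c := by rw [h2]
      _ = -(b * c) := neg_mul _ _
  have hpow : ∀ m : ℕ, a ^ m * c ^ m = 1 ∧ c ^ m * a ^ m = 1 := by
    intro m
    induction m with
    | zero => simp
    | succ m ih =>
      constructor
      · rw [pow_succ a m, pow_succ' c m, mul_assoc, ← mul_assoc a c (c ^ m), haS, one_mul, ih.1]
      · rw [pow_succ c m, pow_succ' a m, mul_assoc, ← mul_assoc c a (a ^ m), hSa, one_mul, ih.2]
  have hSan : HopfAlgebra.antipode (R := k) (a ^ n) = c ^ n := HopfAux.antipode_pow' a n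
  -- antipode of g
  have key1 : c ^ n * (a ^ n * (b * (c ^ n * c))) = b * (c ^ n * c) := by
    rw [← mul_assoc, (hpow n).2, one_mul]
  have key2 : (b * a ^ n) * (c ^ n * c) = b * c := by
    rw [mul_assoc b (a ^ n) (c ^ n * c), ← mul_assoc (a ^ n) (c ^ n) c, (hpow n).1, one_mul]
  have hRHS : c ^ n * (g * (c ^ n * c)) = b * (c ^ n * c) - q • (c ^ n * (b * c)) := by
    rw [hgdef, sub_mul, smul_mul_assoc, mul_sub, mul_smul_comm,
      mul_assoc (a ^ n) b (c ^ n * c), key1, key2]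
  have hSg : HopfAlgebra.antipode (R := k) g = -(c ^ n * (g * (c ^ n * c))) := by
    have e0 : HopfAlgebra.antipode (R := k) g
        = (-(b * c)) * c ^ n - q • (c ^ n * (-(b * c))) := by
      rw [hgdef, map_sub, map_smul, HopfAux.antipode_mul_antidistrib,
        HopfAux.antipode_mul_antidistrib, hSan, hSb]
    rw [e0, hRHS]
    rw [neg_mul, mul_neg, smul_neg, sub_neg_eq_add, neg_sub, ← mul_assoc,
      mul_assoc b c (c ^ n), ← pow_succ', ← pow_succ]
    abel
  have hSgI : HopfAlgebra.antipode (R := k) g ∈ I := by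
    rw [hSg]
    exact I.neg_mem (I.mul_mem_left _ _ (I.mul_mem_right _ _ hgI))
  -- counit of g
  have hεg : Coalgebra.counit (R := k) g = 0 := by
    rw [hgdef, map_sub, map_smul, Bialgebra.counit_mul, Bialgebra.counit_mul,
      Bialgebra.counit_pow, hεa, hεb, one_pow]
    simp
  -- comul of g
  have hcan : Coalgebra.comul (R := k) (a ^ n) = (a ^ n) ⊗ₜ[k] (a ^ n) := by
    rw [Bialgebra.comul_pow, ha, Algebra.TensorProduct.tmul_pow]
  have hcg : Coalgebra.comul (R := k) g = g ⊗ₜ[k] (a ^ (n + 1)) + (a ^ n) ⊗ₜ[k] g := by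
    rw [hgdef, map_sub, map_smul, Bialgebra.comul_mul, Bialgebra.comul_mul, hcan, hb]
    rw [mul_add, add_mul]
    simp only [Algebra.TensorProduct.tmul_mul_tmul, one_mul, mul_one]
    simp only [smul_sub, smul_add, sub_tmul, tmul_sub, add_tmul, tmul_add,
      TensorProduct.smul_tmul', tmul_smul, ← pow_succ, ← pow_succ']
    abel
  -- closure of the sum of ranges under multiplication
  have hJmull : ∀ (r z : H), z ∈ J → r * z ∈ J := fun r z hz =>
    memJ.2 (I.mul_mem_left r z (memJ.1 hz))
  have hJmulr : ∀ (r z : H), z ∈ J → z * r ∈ J := fun r z hz =>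
    memJ.2 (I.mul_mem_right z r (memJ.1 hz))
  have keyR : ∀ w : J ⊗[k] H, ∀ s : H ⊗[k] H,
      s * (LinearMap.rTensor H J.subtype w) ∈ LinearMap.range (LinearMap.rTensor H J.subtype) ∧
      (LinearMap.rTensor H J.subtype w) * s ∈ LinearMap.range (LinearMap.rTensor H J.subtype) := by
    intro w
    induction w using TensorProduct.induction_on with
    | zero => intro s; simp
    | tmul j h =>
      intro s
      induction s using TensorProduct.induction_on with
      | zero => simp
      | tmul s1 s2 =>
        constructor
        · exact ⟨(⟨s1 * (j : H), hJmull s1 _ j.2⟩ : J) ⊗ₜ[k] (s2 * h), by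
            simp [LinearMap.rTensor_tmul, Algebra.TensorProduct.tmul_mul_tmul]⟩
        · exact ⟨(⟨(j : H) * s1, hJmulr s1 _ j.2⟩ : J) ⊗ₜ[k] (h * s2), by
            simp [LinearMap.rTensor_tmul, Algebra.TensorProduct.tmul_mul_tmul]⟩
      | add s1 s2 ih1 ih2 =>
        constructor
        · rw [add_mul]; exact Submodule.add_mem _ ih1.1 ih2.1
        · rw [mul_add]; exact Submodule.add_mem _ ih1.2 ih2.2
    | add w1 w2 ih1 ih2 =>
      intro s
      rw [map_add]
      constructor
      · rw [mul_add]; exact Submodule.add_mem _ (ih1 s).1 (ih2 s).1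
      · rw [add_mul]; exact Submodule.add_mem _ (ih1 s).2 (ih2 s).2
  have keyL : ∀ w : H ⊗[k] J, ∀ s : H ⊗[k] H,
      s * (LinearMap.lTensor H J.subtype w) ∈ LinearMap.range (LinearMap.lTensor H J.subtype) ∧
      (LinearMap.lTensor H J.subtype w) * s ∈ LinearMap.range (LinearMap.lTensor H J.subtype) := by
    intro w
    induction w using TensorProduct.induction_on with
    | zero => intro s; simp
    | tmul h j =>
      intro s
      induction s using TensorProduct.induction_on with
      | zero => simp
      | tmul s1 s2 =>
        constructor
        · exact ⟨(s1 * h) ⊗ₜ[k] (⟨s2 * (j : H), hJmull s2 _ j.2⟩ : J), by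
            simp [LinearMap.lTensor_tmul, Algebra.TensorProduct.tmul_mul_tmul]⟩
        · exact ⟨(h * s1) ⊗ₜ[k] (⟨(j : H) * s2, hJmulr s2 _ j.2⟩ : J), by
            simp [LinearMap.lTensor_tmul, Algebra.TensorProduct.tmul_mul_tmul]⟩
      | add s1 s2 ih1 ih2 =>
        constructor
        · rw [add_mul]; exact Submodule.add_mem _ ih1.1 ih2.1
        · rw [mul_add]; exact Submodule.add_mem _ ih1.2 ih2.2
    | add w1 w2 ih1 ih2 =>
      intro s
      rw [map_add]
      constructor
      · rw [mul_add]; exact Submodule.add_mem _ (ih1 s).1 (ih2 s).1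
      · rw [add_mul]; exact Submodule.add_mem _ (ih1 s).2 (ih2 s).2
  have Pcl : ∀ s t : H ⊗[k] H,
      t ∈ LinearMap.range (LinearMap.rTensor H J.subtype)
          + LinearMap.range (LinearMap.lTensor H J.subtype) →
      s * t ∈ LinearMap.range (LinearMap.rTensor H J.subtype)
          + LinearMap.range (LinearMap.lTensor H J.subtype) ∧
      t * s ∈ LinearMap.range (LinearMap.rTensor H J.subtype)
          + LinearMap.range (LinearMap.lTensor H J.subtype) := by
    intro s t ht
    rw [Submodule.add_eq_sup, Submodule.mem_sup] at ht
    obtain ⟨t1, ⟨w1, rfl⟩, t2, ⟨w2, rfl⟩, rfl⟩ := ht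
    rw [Submodule.add_eq_sup]
    constructor
    · rw [mul_add]
      exact Submodule.add_mem_sup (keyR w1 s).1 (keyL w2 s).1
    · rw [add_mul]
      exact Submodule.add_mem_sup (keyR w1 s).2 (keyL w2 s).2
  -- the two-sided ideal of elements satisfying all three conditions
  set Pr : Submodule k (H ⊗[k] H) := LinearMap.range (LinearMap.rTensor H J.subtype)
      + LinearMap.range (LinearMap.lTensor H J.subtype) with hPr
  let K : TwoSidedIdeal H := TwoSidedIdeal.mk'
    {x : H | Coalgebra.comul (R := k) x ∈ Pr ∧ Coalgebra.counit (R := k) x = 0 ∧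
      HopfAlgebra.antipode (R := k) x ∈ I}
    ⟨by simp only [map_zero]; exact Submodule.zero_mem _,
     by simp only [map_zero],
     by simp only [map_zero]; exact I.zero_mem⟩
    (fun {x y} hx hy => ⟨by rw [map_add]; exact Submodule.add_mem _ hx.1 hy.1,
      by rw [map_add, hx.2.1, hy.2.1, add_zero],
      by rw [map_add]; exact I.add_mem hx.2.2 hy.2.2⟩)
    (fun {x} hx => ⟨by rw [map_neg]; exact Submodule.neg_mem _ hx.1,
      by rw [map_neg, hx.2.1, neg_zero],
      by rw [map_neg]; exact I.neg_mem hx.2.2⟩)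
    (fun {x y} hy => ⟨by rw [Bialgebra.comul_mul]; exact (Pcl _ _ hy.1).1,
      by rw [Bialgebra.counit_mul, hy.2.1, mul_zero],
      by rw [HopfAux.antipode_mul_antidistrib]; exact I.mul_mem_right _ _ hy.2.2⟩)
    (fun {x y} hx => ⟨by rw [Bialgebra.comul_mul]; exact (Pcl _ _ hx.1).2,
      by rw [Bialgebra.counit_mul, hx.2.1, zero_mul],
      by rw [HopfAux.antipode_mul_antidistrib]; exact I.mul_mem_left _ _ hx.2.2⟩)
  have hgK : g ∈ K := by
    rw [TwoSidedIdeal.mem_mk']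
    refine ⟨?_, hεg, hSgI⟩
    rw [hcg, hPr, Submodule.add_eq_sup]
    refine Submodule.add_mem_sup ⟨(⟨g, hgJ⟩ : J) ⊗ₜ[k] (a ^ (n + 1)), ?_⟩
      ⟨(a ^ n) ⊗ₜ[k] (⟨g, hgJ⟩ : J), ?_⟩
    · simp [LinearMap.rTensor_tmul]
    · simp [LinearMap.lTensor_tmul]
  have main : ∀ z : H, z ∈ I → z ∈ K := by
    intro z hz
    rw [hI] at hz
    refine TwoSidedIdeal.mem_span_iff.1 hz K ?_
    intro t ht
    rw [Set.mem_singleton_iff] at ht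
    subst ht
    exact hgK
  refine ⟨fun x hx => ?_, fun x hx => ?_, fun x hx => ?_⟩
  · exact ((TwoSidedIdeal.mem_mk' _ _ _ _ _ _ _).1 (main x (memJ.1 hx))).1
  · exact ((TwoSidedIdeal.mem_mk' _ _ _ _ _ _ _).1 (main x (memJ.1 hx))).2.1
  · exact memJ.2 ((TwoSidedIdeal.mem_mk' _ _ _ _ _ _ _).1 (main x (memJ.1 hx))).2.2
end

section
/- Let k be a field and let 𝒜 be the quotient of the free k-algebra on generators a, a', b by the two-sided ideal generated by a·a' − 1 and a'·a − 1, with the bialgebra structure determined by Δ(a) = a ⊗ a, Δ(a') = a' ⊗ a', Δ(b) = b ⊗ a + 1 ⊗ b, ε(a) = ε(a') = 1, ε(b) = 0, and let α : k[x] → k[x] ⊗ 𝒜 be the algebra homomorphism with α(x) = x ⊗ a + 1 ⊗ b. Let H be any Hopf algebra over k with antipode S_H, and let β : k[x] → k[x] ⊗ H be a k-algebra homomorphism right coaction ((id ⊗ Δ_H) ∘ β = (β ⊗ id) ∘ β, (id ⊗ ε_H) ∘ β = id) with β(x) = x ⊗ a₀ + 1 ⊗ b₀ for some a₀, b₀ ∈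 H. Then there exists a unique k-algebra homomorphism π : 𝒜 → H with π(a) = a₀, π(a') = S_H(a₀), π(b) = b₀; moreover π is a bialgebra homomorphism (Δ_H ∘ π = (π ⊗ π) ∘ Δ, ε_H ∘ π = ε) and β = (id ⊗ π) ∘ α. -/
open TensorProduct Polynomial

/-- The relation defining the universal quantum `ax + b` group: the free algebra on three
generators `a, a', b` (indexed `0, 1, 2`) with `a*a'` and `a'*a` identified with `1`. -/
inductive AxbRel (k : Type*) [Field k] :
    FreeAlgebra k (Fin 3) → FreeAlgebra k (Fin 3) → Prop
  | aa' : AxbRel k (FreeAlgebra.ι k 0 * FreeAlgebra.ι k 1) 1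
  | a'a : AxbRel k (FreeAlgebra.ι k 1 * FreeAlgebra.ι k 0) 1

/-- The images `a, a', b` of the three generators in the quotient algebra `𝒜`. -/
noncomputable def axbGen (k : Type*) [Field k] (i : Fin 3) : RingQuot (AxbRel k) :=
  RingQuot.mkAlgHom k (AxbRel k) (FreeAlgebra.ι k i)

/-- Extract the coefficient of `X^n` on the left factor of `k[X] ⊗ M`. -/
noncomputable def coefT (k : Type*) [Field k] (M : Type*) [AddCommMonoid M] [Module k M]
    (n : ℕ) : Polynomial k ⊗[k] M →ₗ[k] M :=
  (TensorProduct.lid k M).toLinearMap ∘ₗ LinearMap.rTensor M (Polynomial.lcoeff k n)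

@[simp] lemma coefT_tmul (k : Type*) [Field k] (M : Type*) [AddCommMonoid M] [Module k M]
    (n : ℕ) (p : Polynomial k) (m : M) : coefT k M n (p ⊗ₜ[k] m) = p.coeff n • m := by
  simp [coefT]

/-- Universality of the quantum `ax + b` group `(𝒜, α)`: for any Hopf
algebra `H` with a right coaction `β` on `k[x]` of the form `β(x) = x ⊗ a₀ + 1 ⊗ b₀`,
there is a unique algebra homomorphism `π : 𝒜 → H` with `π(a) = a₀`, `π(a') = S_H(a₀)`,
`π(b) = b₀`; moreover `π` is a bialgebra homomorphism and `β = (id ⊗ π) ∘ α`. -/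
theorem universal_quantum_axb_universal_property
    (k : Type*) [Field k]
    (Δ : RingQuot (AxbRel k) →ₐ[k] RingQuot (AxbRel k) ⊗[k] RingQuot (AxbRel k))
    (ε : RingQuot (AxbRel k) →ₐ[k] k)
    (hΔa : Δ (axbGen k 0) = axbGen k 0 ⊗ₜ[k] axbGen k 0)
    (hΔa' : Δ (axbGen k 1) = axbGen k 1 ⊗ₜ[k] axbGen k 1)
    (hΔb : Δ (axbGen k 2) = axbGen k 2 ⊗ₜ[k] axbGen k 0 + 1 ⊗ₜ[k] axbGen k 2)
    (hεa : ε (axbGen k 0) = 1) (hεa' : ε (axbGen k 1) = 1) (hεb : ε (axbGen k 2) = 0)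
    (α : Polynomial k →ₐ[k] Polynomial k ⊗[k] RingQuot (AxbRel k))
    (hα : α X = X ⊗ₜ[k] axbGen k 0 + 1 ⊗ₜ[k] axbGen k 2)
    (H : Type*) [Ring H] [HopfAlgebra k H]
    (β : Polynomial k →ₐ[k] Polynomial k ⊗[k] H)
    (hβcoassoc : ∀ p : Polynomial k,
      (TensorProduct.assoc k (Polynomial k) H H)
          ((LinearMap.rTensor H β.toLinearMap) (β p))
        = (LinearMap.lTensor (Polynomial k) (Coalgebra.comul (R := k))) (β p))
    (hβcounit : ∀ p : Polynomial k,
      (TensorProduct.rid k (Polynomial k))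
          ((LinearMap.lTensor (Polynomial k) (Coalgebra.counit (R := k))) (β p)) = p)
    (a₀ b₀ : H) (hβX : β X = X ⊗ₜ[k] a₀ + 1 ⊗ₜ[k] b₀) :
    ∃ π : RingQuot (AxbRel k) →ₐ[k] H,
      (π (axbGen k 0) = a₀ ∧
       π (axbGen k 1) = HopfAlgebra.antipode (R := k) a₀ ∧
       π (axbGen k 2) = b₀) ∧
      -- `π` is a bialgebra homomorphism
      (∀ x, Coalgebra.comul (R := k) (π x)
          = TensorProduct.map π.toLinearMap π.toLinearMap (Δ x)) ∧
      (∀ x, Coalgebra.counit (R := k) (π x) = ε x) ∧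
      -- `β = (id ⊗ π) ∘ α`
      (∀ p : Polynomial k,
        β p = (LinearMap.lTensor (Polynomial k) π.toLinearMap) (α p)) ∧
      -- uniqueness
      (∀ π' : RingQuot (AxbRel k) →ₐ[k] H,
        π' (axbGen k 0) = a₀ → π' (axbGen k 1) = HopfAlgebra.antipode (R := k) a₀ →
        π' (axbGen k 2) = b₀ → π' = π) := by
  -- Step 1: a₀ is grouplike and b₀ is "primitive-like"
  have key := hβcoassoc X
  rw [hβX] at key
  have h1 : (β : Polynomial k →ₐ[k] Polynomial k ⊗[k] H) 1 = (1 : Polynomial k) ⊗ₜ[k] (1 : H) := by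
    rw [map_one]; rfl
  rw [map_add, LinearMap.rTensor_tmul, LinearMap.rTensor_tmul] at key
  simp only [AlgHom.toLinearMap_apply, hβX, h1] at key
  rw [add_tmul, (TensorProduct.assoc k (Polynomial k) H H).map_add,
    (TensorProduct.assoc k (Polynomial k) H H).map_add] at key
  simp only [TensorProduct.assoc_tmul, LinearMap.lTensor_tmul] at key
  have k1 := congrArg (coefT k (H ⊗[k] H) 1) key
  have k0 := congrArg (coefT k (H ⊗[k] H) 0) key
  simp only [map_add, LinearMap.lTensor_tmul, coefT_tmul, Polynomial.coeff_X_one,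
    Polynomial.coeff_X_zero, Polynomial.coeff_one, one_smul, zero_smul, add_zero,
    zero_add] at k1 k0
  norm_num at k1 k0
  have key2 := hβcounit X
  rw [hβX, map_add, LinearMap.lTensor_tmul, LinearMap.lTensor_tmul] at key2
  simp only [map_add, TensorProduct.rid_tmul] at key2
  have c1 := congrArg (fun p => Polynomial.coeff p 1) key2
  have c0 := congrArg (fun p => Polynomial.coeff p 0) key2
  simp only [Polynomial.coeff_add, Polynomial.coeff_smul, Polynomial.coeff_X_one,
    Polynomial.coeff_X_zero, Polynomial.coeff_one, smul_eq_mul, mul_one, mul_zero,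
    if_pos rfl, if_neg (one_ne_zero : (1:ℕ) ≠ 0), add_zero, zero_add] at c1 c0
  norm_num at c0
  have hcom : Coalgebra.comul (R := k) a₀ = a₀ ⊗ₜ[k] a₀ := k1.symm
  have hcomb : Coalgebra.comul (R := k) b₀ = b₀ ⊗ₜ[k] a₀ + 1 ⊗ₜ[k] b₀ := k0.symm
  have hcu : Coalgebra.counit (R := k) a₀ = 1 := c1
  have hcub : Coalgebra.counit (R := k) b₀ = 0 := c0
  -- Step 2: antipode inverts a₀
  set S : H := HopfAlgebra.antipode (R := k) a₀ with hS
  have hSa : S * a₀ = 1 := by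
    have := HopfAlgebra.mul_antipode_rTensor_comul_apply (R := k) (A := H) a₀
    rw [hcom, hcu] at this
    simpa using this
  have haS : a₀ * S = 1 := by
    have := HopfAlgebra.mul_antipode_lTensor_comul_apply (R := k) (A := H) a₀
    rw [hcom, hcu] at this
    simpa using this
  -- Step 3: construct π
  have hrel : ∀ ⦃x y : FreeAlgebra k (Fin 3)⦄, AxbRel k x y →
      (FreeAlgebra.lift k ![a₀, S, b₀]) x = (FreeAlgebra.lift k ![a₀, S, b₀]) y := by
    intro x y h
    cases h with
    | aa' => simp [haS]
    | a'a => simp [hSa]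
  set π : RingQuot (AxbRel k) →ₐ[k] H :=
    RingQuot.liftAlgHom k ⟨FreeAlgebra.lift k ![a₀, S, b₀], hrel⟩ with hπdef
  have hπ0 : π (axbGen k 0) = a₀ := by
    simp [hπdef, axbGen, RingQuot.liftAlgHom_mkAlgHom_apply]
  have hπ1 : π (axbGen k 1) = S := by
    simp [hπdef, axbGen, RingQuot.liftAlgHom_mkAlgHom_apply]
  have hπ2 : π (axbGen k 2) = b₀ := by
    simp [hπdef, axbGen, RingQuot.liftAlgHom_mkAlgHom_apply]
  -- comul of S
  have e1 : (a₀ ⊗ₜ[k] a₀) * Coalgebra.comul (R := k) S = 1 := by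
    rw [← hcom, ← Bialgebra.comulAlgHom_apply k, ← Bialgebra.comulAlgHom_apply k, ← map_mul,
      haS, map_one]
  have e2 : (S ⊗ₜ[k] S) * (a₀ ⊗ₜ[k] a₀) = (1 : H ⊗[k] H) := by
    rw [Algebra.TensorProduct.tmul_mul_tmul, hSa, Algebra.TensorProduct.one_def]
  have hcomS : Coalgebra.comul (R := k) S = S ⊗ₜ[k] S :=
    (left_inv_eq_right_inv e2 e1).symm
  have hcuS : Coalgebra.counit (R := k) S = 1 := by
    have : Coalgebra.counit (R := k) S * Coalgebra.counit (R := k) a₀ = 1 := by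
      rw [← Bialgebra.counitAlgHom_apply k, ← Bialgebra.counitAlgHom_apply k, ← map_mul,
        hSa, map_one]
    rwa [hcu, mul_one] at this
  have hgen : ∀ i, RingQuot.mkAlgHom k (AxbRel k) (FreeAlgebra.ι k i) = axbGen k i :=
    fun _ => rfl
  refine ⟨π, ⟨hπ0, hπ1, hπ2⟩, ?_, ?_, ?_, ?_⟩
  · -- comul compatibility
    have hhom : (Bialgebra.comulAlgHom k H).comp π = (Algebra.TensorProduct.map π π).comp Δ := by
      apply RingQuot.ringQuot_ext'
      apply FreeAlgebra.hom_ext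
      funext i
      fin_cases i <;>
        simp [hgen, hΔa, hΔa', hΔb, hπ0, hπ1, hπ2, hcom, hcomS, hcomb,
          Bialgebra.comulAlgHom_apply]
    intro x
    have := congrArg (fun f : RingQuot (AxbRel k) →ₐ[k] H ⊗[k] H => f x) hhom
    simp only [AlgHom.coe_comp, Function.comp_apply, Bialgebra.comulAlgHom_apply] at this
    rw [this]
    have : ∀ t : RingQuot (AxbRel k) ⊗[k] RingQuot (AxbRel k),
        (Algebra.TensorProduct.map π π) t = TensorProduct.map π.toLinearMap π.toLinearMap t := by
      intro t
      induction t using TensorProduct.induction_on with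
      | zero => simp
      | tmul => simp
      | add _ _ h h' => simp [map_add, h, h']
    rw [this]
  · -- counit compatibility
    have hhom : (Bialgebra.counitAlgHom k H).comp π = ε := by
      apply RingQuot.ringQuot_ext'
      apply FreeAlgebra.hom_ext
      funext i
      fin_cases i <;>
        simp [hgen, hεa, hεa', hεb, hπ0, hπ1, hπ2, hcu, hcuS, hcub,
          Bialgebra.counitAlgHom_apply]
    intro x
    have := congrArg (fun f : RingQuot (AxbRel k) →ₐ[k] k => f x) hhom
    simpa using this
  · -- β = (id ⊗ π) ∘ α
    have hhom : β = (Algebra.TensorProduct.map (AlgHom.id k (Polynomial k)) π).comp α := by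
      apply Polynomial.algHom_ext
      simp [hα, hβX, hπ0, hπ2]
    intro p
    rw [hhom]
    simp only [AlgHom.coe_comp, Function.comp_apply]
    induction α p using TensorProduct.induction_on with
    | zero => simp
    | tmul => simp
    | add _ _ h h' => simp [map_add, h, h']
  · -- uniqueness
    intro π' h0 h1 h2
    apply RingQuot.ringQuot_ext'
    apply FreeAlgebra.hom_ext
    funext i
    fin_cases i <;>
      simp [hgen, h0, h1, h2, hπ0, hπ1, hπ2]
end
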